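/- Let F, G ∈ k[X,Y] with det Jac(F,G) ∈ k*, and let (𝒰(t),𝒱(t)) ∈ k[X,Y][[t]]² be the unique solution of F(𝒰,𝒱)=tX+(1-t)F, G(𝒰,𝒱)=tY+(1-t)G, 𝒰(0)=X, 𝒱(0)=Y. For each n ≥ 1, the coefficients uₙ, vₙ of tⁿ in 𝒰, 𝒱 are determined recursively: D₁·(uₙ, vₙ)ᵀ equals an expression depending only on F, G and the coefficients u₁,...,uₙ₋₁, v₁,...,vₙ₋₁, where D₁ = Jac(F,G) is invertible over k[X,Y]. In particular, each coefficient of 𝒰 and 𝒱 is a polynomial, i.e., lies in k[X,Y]. -/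

import Mathlib

/-!
Let `𝒰'`, `𝒱'` be the truncations of `𝒰`, `𝒱` below degree `n`. Their differences with `𝒰`, `𝒱`
are divisible by `tⁿ`, so all second-order terms of the Taylor expansion of a polynomial `P` at
`(𝒰', 𝒱')` are divisible by `t²ⁿ` and do not reach degree `n ≥ 1`. Hence the `tⁿ`-coefficient of
`P(𝒰, 𝒱)` is that of `P(𝒰', 𝒱')` plus `∂ₓP(u₀, v₀)·uₙ + ∂ᵧP(u₀, v₀)·vₙ`, and `(u₀, v₀) = (X, Y)`.
Applied to `P = F, G` and compared with the right-hand sides, this expresses `D₁·(uₙ, vₙ)ᵀ`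
through `u₀, …, uₙ₋₁, v₀, …, vₙ₋₁` alone.
-/

open MvPolynomial

section

variable {σ R A : Type*} [CommSemiring R] [CommRing A] [Algebra R A]

lemma MvPolynomial.aeval_sub_mem_of_sub_mem {I : Ideal A} {f g : σ → A}
    (h : ∀ i, f i - g i ∈ I) (p : MvPolynomial σ R) : aeval f p - aeval g p ∈ I := by
  have hfg : (fun i => Ideal.Quotient.mkₐ R I (f i)) = fun i => Ideal.Quotient.mkₐ R I (g i) :=
    _root_.funext fun i => Ideal.Quotient.eq.mpr (h i)
  rw [← Ideal.Quotient.eq, ← Ideal.Quotient.mkₐ_eq_mk R, comp_aeval_apply, comp_aeval_apply,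
    hfg]

namespace PowerSeries

lemma X_pow_dvd_aeval_sub {n : ℕ} {f g : σ → A⟦X⟧} (h : ∀ i, X ^ n ∣ f i - g i)
    (p : MvPolynomial σ R) : X ^ n ∣ MvPolynomial.aeval f p - MvPolynomial.aeval g p := by
  simp only [← Ideal.mem_span_singleton] at h ⊢
  exact aeval_sub_mem_of_sub_mem h p

lemma constantCoeff_aeval (f : σ → A⟦X⟧) (p : MvPolynomial σ R) :
    constantCoeff (MvPolynomial.aeval f p) =
      MvPolynomial.aeval (fun i => constantCoeff (f i)) p := by
  induction p using MvPolynomial.induction_on with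
  | C a => simp [algebraMap_apply]
  | add p q hp hq => simp [hp, hq]
  | mul_X p i hp => simp [hp]

lemma coeff_mul_eq_of_X_pow_dvd_sub {n : ℕ} (hn : 1 ≤ n) {P Q W Z : A⟦X⟧}
    (hPQ : X ^ n ∣ P - Q) (hWZ : X ^ n ∣ W - Z) :
    coeff n (P * W) = coeff n (Q * Z) + coeff n (P - Q) * constantCoeff Z +
      constantCoeff Q * coeff n (W - Z) := by
  obtain ⟨a, ha⟩ := hPQ
  obtain ⟨b, hb⟩ := hWZ
  have hcoeff : ∀ φ : A⟦X⟧, coeff n (X ^ n * φ) = constantCoeff φ := fun φ => by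
    simpa using coeff_X_pow_mul φ n 0
  have hsplit : P * W = Q * Z + X ^ n * (a * Z + Q * b) + X ^ n * (X ^ n * (a * b)) := by
    rw [eq_add_of_sub_eq ha, eq_add_of_sub_eq hb]; ring
  rw [hsplit, ha, hb]
  simp only [map_add, hcoeff, map_mul, map_pow, constantCoeff_X, zero_pow (by omega : n ≠ 0)]
  ring

def ofFinCoeffs {n : ℕ} (u : Fin n → A) : A⟦X⟧ :=
  mk fun j => if h : j < n then u ⟨j, h⟩ else 0

lemma coeff_ofFinCoeffs_self {n : ℕ} (u : Fin n → A) : coeff n (ofFinCoeffs u) = 0 := by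
  simp [ofFinCoeffs]

lemma X_pow_dvd_sub_ofFinCoeffs (n : ℕ) (φ : A⟦X⟧) :
    X ^ n ∣ φ - ofFinCoeffs (fun j : Fin n => coeff j φ) := by
  rw [X_pow_dvd_iff]
  intro m hm
  simp [ofFinCoeffs, hm]

lemma constantCoeff_ofFinCoeffs {n : ℕ} (hn : 1 ≤ n) (φ : A⟦X⟧) :
    constantCoeff (ofFinCoeffs (fun j : Fin n => coeff j φ)) = constantCoeff φ := by
  rw [← coeff_zero_eq_constantCoeff_apply, ← coeff_zero_eq_constantCoeff_apply]
  simp [ofFinCoeffs, show 0 < n by omega]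

lemma coeff_aeval_eq_of_X_pow_dvd_sub [Fintype σ] [DecidableEq σ] {n : ℕ} (hn : 1 ≤ n)
    {f g : σ → A⟦X⟧} (h : ∀ i, X ^ n ∣ f i - g i) (p : MvPolynomial σ R) :
    coeff n (MvPolynomial.aeval f p) = coeff n (MvPolynomial.aeval g p) +
      ∑ i, constantCoeff (MvPolynomial.aeval g (pderiv i p)) * coeff n (f i - g i) := by
  induction p using MvPolynomial.induction_on with
  | C a => simp [algebraMap_apply, coeff_C, show n ≠ 0 by omega]
  | add p q hp hq => simp only [map_add, hp, hq, add_mul, Finset.sum_add_distrib]; ring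
  | mul_X p j hp =>
    have hprod := coeff_mul_eq_of_X_pow_dvd_sub hn (X_pow_dvd_aeval_sub h p) (h j)
    simp only [map_mul, MvPolynomial.aeval_X] at hprod ⊢
    have hderiv : ∀ i, constantCoeff (MvPolynomial.aeval g (pderiv i (p * MvPolynomial.X j))) =
        constantCoeff (g j) * constantCoeff (MvPolynomial.aeval g (pderiv i p)) +
          if j = i then constantCoeff (MvPolynomial.aeval g p) else 0 := fun i => by
      rw [pderiv_mul, pderiv_X, Pi.single_apply]
      split_ifs <;> simp [mul_comm]
    rw [hprod, map_sub, hp]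
    simp only [hderiv, add_mul, ite_mul, zero_mul, Finset.sum_add_distrib, Finset.sum_ite_eq,
      Finset.mem_univ, if_true, mul_assoc, ← Finset.mul_sum]
    ring

lemma coeff_aeval_eq_add_sum_pderiv_mul {k : Type*} [CommRing k] [Fintype σ] [DecidableEq σ]
    {n : ℕ} (hn : 1 ≤ n) {f : σ → (MvPolynomial σ k)⟦X⟧}
    (hf : ∀ i, constantCoeff (f i) = MvPolynomial.X i) (p : MvPolynomial σ k) :
    coeff n (MvPolynomial.aeval f p) =
      coeff n (MvPolynomial.aeval (fun i => ofFinCoeffs fun j : Fin n => coeff j (f i)) p) +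
        ∑ i, pderiv i p * coeff n (f i) := by
  rw [coeff_aeval_eq_of_X_pow_dvd_sub hn (fun i => X_pow_dvd_sub_ofFinCoeffs n (f i))]
  refine congrArg (_ + ·) (Finset.sum_congr rfl fun i _ => ?_)
  simp only [constantCoeff_aeval, constantCoeff_ofFinCoeffs hn, hf, aeval_X_left_apply, map_sub,
    coeff_ofFinCoeffs_self, sub_zero]

end PowerSeries

end

theorem stmt19_general (k : Type*) [Field k]
    (F G : MvPolynomial (Fin 2) k)
    (hJ : ∃ c : k, c ≠ 0 ∧
      Matrix.det !![pderiv 0 F, pderiv 1 F; pderiv 0 G, pderiv 1 G] = C c) :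
    IsUnit (Matrix.det !![pderiv 0 F, pderiv 1 F; pderiv 0 G, pderiv 1 G]) ∧
    ∀ n : ℕ, 1 ≤ n →
      ∃ E : (Fin n → MvPolynomial (Fin 2) k) → (Fin n → MvPolynomial (Fin 2) k) →
          Fin 2 → MvPolynomial (Fin 2) k,
        ∀ U V : PowerSeries (MvPolynomial (Fin 2) k),
          PowerSeries.constantCoeff U = X 0 →
          PowerSeries.constantCoeff V = X 1 →
          aeval ![U, V] F =
            PowerSeries.X * PowerSeries.C (X 0) +
              (1 - PowerSeries.X) * PowerSeries.C F →
          aeval ![U, V] G =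
            PowerSeries.X * PowerSeries.C (X 1) +
              (1 - PowerSeries.X) * PowerSeries.C G →
          Matrix.mulVec !![pderiv 0 F, pderiv 1 F; pderiv 0 G, pderiv 1 G]
              ![PowerSeries.coeff n U, PowerSeries.coeff n V] =
            E (fun j => PowerSeries.coeff j U) (fun j => PowerSeries.coeff j V) := by
  refine ⟨?_, fun n hn => ?_⟩
  · obtain ⟨c, hc, hdet⟩ := hJ
    rw [hdet]
    exact hc.isUnit.map C
  refine ⟨fun u v => ![
      PowerSeries.coeff n
          (PowerSeries.X * PowerSeries.C (X 0) + (1 - PowerSeries.X) * PowerSeries.C F) -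
        PowerSeries.coeff n (aeval ![PowerSeries.ofFinCoeffs u, PowerSeries.ofFinCoeffs v] F),
      PowerSeries.coeff n
          (PowerSeries.X * PowerSeries.C (X 1) + (1 - PowerSeries.X) * PowerSeries.C G) -
        PowerSeries.coeff n (aeval ![PowerSeries.ofFinCoeffs u, PowerSeries.ofFinCoeffs v] G)],
    fun U V hU hV hF hG => ?_⟩
  have htrunc :
      (fun i => PowerSeries.ofFinCoeffs fun j : Fin n => PowerSeries.coeff j (![U, V] i)) =
        ![PowerSeries.ofFinCoeffs fun j : Fin n => PowerSeries.coeff j U,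
          PowerSeries.ofFinCoeffs fun j : Fin n => PowerSeries.coeff j V] := by
    funext i
    fin_cases i <;> rfl
  have hexpand (p : MvPolynomial (Fin 2) k) := PowerSeries.coeff_aeval_eq_add_sum_pderiv_mul hn
    (f := ![U, V]) (fun i => by fin_cases i <;> assumption) p
  simp only [htrunc, Fin.sum_univ_two, Matrix.cons_val_zero, Matrix.cons_val_one] at hexpand
  funext i
  fin_cases i <;>
    simp only [Matrix.mulVec, dotProduct, Fin.sum_univ_two, Fin.zero_eta, Fin.mk_one,
      Matrix.of_apply, Matrix.cons_val_zero, Matrix.cons_val_one, eq_sub_iff_add_eq', ← hexpand]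
  exacts [congrArg _ hF, congrArg _ hG]

/-- The coefficients `uₙ, vₙ` of the unique power series solution are determined
recursively: `D₁ = Jac(F,G)` is invertible over `k[X,Y]`, and for each `n ≥ 1` there
is an expression `E` (depending only on `F` and `G`) in the earlier coefficients
`u₀,...,uₙ₋₁, v₀,...,vₙ₋₁` such that `D₁·(uₙ,vₙ)ᵀ = E` for any solution `(𝒰,𝒱)`.
(Each coefficient automatically lies in `k[X,Y]`.) -/
theorem stmt19 (k : Type*) [Field k] [CharZero k]
    (F G : MvPolynomial (Fin 2) k)
    (hJ : ∃ c : k, c ≠ 0 ∧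
      Matrix.det !![pderiv 0 F, pderiv 1 F; pderiv 0 G, pderiv 1 G] = C c) :
    IsUnit (Matrix.det !![pderiv 0 F, pderiv 1 F; pderiv 0 G, pderiv 1 G]) ∧
    ∀ n : ℕ, 1 ≤ n →
      ∃ E : (Fin n → MvPolynomial (Fin 2) k) → (Fin n → MvPolynomial (Fin 2) k) →
          Fin 2 → MvPolynomial (Fin 2) k,
        ∀ U V : PowerSeries (MvPolynomial (Fin 2) k),
          PowerSeries.constantCoeff U = X 0 →
          PowerSeries.constantCoeff V = X 1 →
          aeval ![U, V] F =
            PowerSeries.X * PowerSeries.C (X 0) +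
              (1 - PowerSeries.X) * PowerSeries.C F →
          aeval ![U, V] G =
            PowerSeries.X * PowerSeries.C (X 1) +
              (1 - PowerSeries.X) * PowerSeries.C G →
          Matrix.mulVec !![pderiv 0 F, pderiv 1 F; pderiv 0 G, pderiv 1 G]
              ![PowerSeries.coeff n U, PowerSeries.coeff n V] =
            E (fun j => PowerSeries.coeff j U) (fun j => PowerSeries.coeff j V) :=
  stmt19_general k F G hJ
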